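/- arXiv:math/0702133 — 2 statements merged into one kernel-verified Lean document; each statement's English description precedes it below -/
import Mathlib

section
/- The M-Wright function of order 1/2 coincides with a Gaussian: M_{1/2}(z) = (1/√π) exp(−z²/4) for all real z, where M_ν(z) = Σ_{n=0}^∞ (−z)^n / (n! Γ(−νn + 1 − ν)). -/
open Real

lemma gamma_half_sub (k : ℕ) :
    Real.Gamma (1 / 2 - k) = Real.sqrt π * (-4) ^ k * k.factorial / (2 * k).factorial := by
  induction k with
  | zero => norm_num [Real.Gamma_one_half_eq]
  | succ k ih =>
      have hne : (-(1 / 2 : ℝ) - k) ≠ 0 := by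
        have : (0:ℝ) ≤ k := Nat.cast_nonneg k
        intro h; nlinarith
      have key := Real.Gamma_add_one hne
      have e1 : (-(1 / 2 : ℝ) - k) + 1 = 1 / 2 - k := by ring
      have e2 : (1 / 2 : ℝ) - ((k : ℕ) + 1 : ℕ) = -(1 / 2) - k := by push_cast; ring
      rw [e1] at key
      rw [e2]
      have hGam : Real.Gamma (-(1 / 2) - k) = Real.Gamma (1 / 2 - k) / (-(1 / 2) - k) := by
        rw [eq_div_iff hne, mul_comm]; exact key.symm
      rw [hGam, ih]
      have h2 : ((2 * (k + 1)).factorial : ℝ) = (2 * k + 2) * (2 * k + 1) * (2 * k).factorial := by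
        have h : 2 * (k + 1) = (2 * k + 1) + 1 := by ring
        rw [h, Nat.factorial_succ, Nat.factorial_succ]
        push_cast; ring
      have h3 : (((k + 1)).factorial : ℝ) = (k + 1) * k.factorial := by
        rw [Nat.factorial_succ]; push_cast; ring
      have hf1 : ((2 * k).factorial : ℝ) ≠ 0 := Nat.cast_ne_zero.mpr (Nat.factorial_ne_zero _)
      have hf2 : ((k).factorial : ℝ) ≠ 0 := Nat.cast_ne_zero.mpr (Nat.factorial_ne_zero _)
      have h21 : (2 * (k:ℝ) + 1) ≠ 0 := by positivity
      have d1 : ((2 * k).factorial : ℝ) * (-(1 / 2) - k) ≠ 0 := mul_ne_zero hf1 hne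
      have d2 : ((2 * (k:ℝ) + 2) * (2 * k + 1) * (2 * k).factorial) ≠ 0 := by positivity
      rw [h2, h3, div_div, pow_succ, div_eq_div_iff d1 d2]
      ring

/-- The M-Wright function of order `1/2` coincides with a Gaussian:
`M_{1/2}(z) = (1/√π) exp(−z²/4)` for all real `z`. -/
theorem M_wright_half_eq_gaussian (z : ℝ) :
    ∑' n : ℕ, (-z) ^ n / (n.factorial * Real.Gamma (-(1 / 2) * n + (1 - 1 / 2)))
      = (1 / Real.sqrt π) * Real.exp (-z ^ 2 / 4) := by
  set f : ℕ → ℝ := fun n => (-z) ^ n / (n.factorial * Real.Gamma (-(1 / 2) * n + (1 - 1 / 2)))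
    with hf_def
  set g : ℕ → ℝ := fun k => (1 / Real.sqrt π) * ((-z ^ 2 / 4) ^ k / k.factorial) with hg_def
  have hπ : Real.sqrt π ≠ 0 := by positivity
  have hodd : ∀ k : ℕ, f (2 * k + 1) = 0 := by
    intro k
    have harg : -(1 / 2 : ℝ) * ((2 * k + 1 : ℕ) : ℝ) + (1 - 1 / 2) = -(k : ℝ) := by
      push_cast; ring
    show (-z) ^ (2 * k + 1) / ((2 * k + 1).factorial *
        Real.Gamma (-(1 / 2) * ((2 * k + 1 : ℕ) : ℝ) + (1 - 1 / 2))) = 0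
    rw [harg, Real.Gamma_neg_nat_eq_zero, mul_zero, div_zero]
  have heven : ∀ k : ℕ, f (2 * k) = g k := by
    intro k
    have harg : -(1 / 2 : ℝ) * ((2 * k : ℕ) : ℝ) + (1 - 1 / 2) = 1 / 2 - k := by
      push_cast; ring
    show (-z) ^ (2 * k) / ((2 * k).factorial *
        Real.Gamma (-(1 / 2) * ((2 * k : ℕ) : ℝ) + (1 - 1 / 2)))
      = (1 / Real.sqrt π) * ((-z ^ 2 / 4) ^ k / k.factorial)
    rw [harg, gamma_half_sub]
    have hz : (-z) ^ (2 * k) = (z ^ 2) ^ k := by rw [pow_mul, neg_sq]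
    have e4 : ((-4 : ℝ)) ^ k = (-1) ^ k * 4 ^ k := by
      rw [show (-4 : ℝ) = -1 * 4 by norm_num, mul_pow]
    have ez : ((-z ^ 2 / 4 : ℝ)) ^ k = (-1) ^ k * (z ^ 2) ^ k / 4 ^ k := by
      rw [div_pow, show (-z ^ 2 : ℝ) = -1 * z ^ 2 by ring, mul_pow]
    have hf1 : ((2 * k).factorial : ℝ) ≠ 0 := Nat.cast_ne_zero.mpr (Nat.factorial_ne_zero _)
    have hf2 : ((k).factorial : ℝ) ≠ 0 := Nat.cast_ne_zero.mpr (Nat.factorial_ne_zero _)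
    have hm1 : ((-1 : ℝ)) ^ k ≠ 0 := pow_ne_zero _ (by norm_num)
    have h4 : ((4 : ℝ)) ^ k ≠ 0 := by positivity
    rw [hz, e4, ez]
    have hone : ((-1 : ℝ)) ^ k * (-1) ^ k = 1 := by
      rw [← pow_add, ← two_mul, pow_mul, neg_one_sq, one_pow]
    field_simp
    linear_combination (-(z ^ 2) ^ k) * hone
  have hbij : (∑' n, f n) = ∑' k, g k := by
    apply tsum_eq_tsum_of_ne_zero_bij (fun x : Function.support g => 2 * (x : ℕ))
    · intro a b hab
      simpa [Subtype.ext_iff] using hab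
    · intro n hn
      rcases Nat.even_or_odd n with ⟨k, hk⟩ | ⟨k, hk⟩
      · have hk' : n = 2 * k := by omega
        refine ⟨⟨k, ?_⟩, hk'.symm⟩
        rw [Function.mem_support, ← heven, ← hk']; exact hn
      · exact (hn (by rw [hk]; exact hodd k)).elim
    · intro x; exact heven x
  rw [hbij]
  simp only [hg_def]
  rw [tsum_mul_left]
  congr 1
  rw [Real.exp_eq_exp_ℝ, NormedSpace.exp_eq_tsum_div]
end

section
/- For 0 < ν < 1, the series M_ν(z) = Σ_{n=0}^∞ (−z)^n / (n! Γ(−νn + 1 − ν)) converges absolutely for every complex z (i.e. M_ν is an entire function). -/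
open Complex

/-- For `1 ≤ s ≤ k+1`, `Γ s ≤ k!`, by log-convexity of `Γ`. -/
lemma gamma_le_factorial_aux {s : ℝ} {k : ℕ} (h1 : 1 ≤ s) (h2 : s ≤ (k : ℝ) + 1) :
    Real.Gamma s ≤ k.factorial := by
  have hconv := Real.convexOn_log_Gamma
  have hx : (1:ℝ) ∈ Set.Ioi (0:ℝ) := by norm_num
  have hy : ((k:ℝ)+1) ∈ Set.Ioi (0:ℝ) := Set.mem_Ioi.mpr (by positivity)
  have hz : s ∈ segment ℝ (1:ℝ) ((k:ℝ)+1) := by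
    rw [segment_eq_Icc (by linarith [Nat.cast_nonneg (α := ℝ) k] : (1:ℝ) ≤ (k:ℝ)+1)]
    exact ⟨h1, h2⟩
  have hle := hconv.le_on_segment hx hy hz
  have hGk : Real.Gamma ((k:ℝ)+1) = k.factorial := Real.Gamma_nat_eq_factorial k
  have hfac1 : (1:ℝ) ≤ k.factorial := by exact_mod_cast Nat.one_le_iff_ne_zero.mpr k.factorial_ne_zero
  simp only [Function.comp, Real.Gamma_one, hGk, Real.log_one] at hle
  rw [max_eq_right (Real.log_nonneg hfac1)] at hle
  have hGs : 0 < Real.Gamma s := Real.Gamma_pos_of_pos (by linarith)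
  calc Real.Gamma s = Real.exp (Real.log (Real.Gamma s)) := (Real.exp_log hGs).symm
    _ ≤ Real.exp (Real.log k.factorial) := Real.exp_le_exp.2 hle
    _ = k.factorial := Real.exp_log (by positivity)

set_option maxHeartbeats 1000000 in
/-- For `0 < ν < 1`, the series defining the M-Wright function `M_ν` converges absolutely
for every complex `z`. -/
theorem M_wright_summable (ν : ℝ) (hν0 : 0 < ν) (hν1 : ν < 1) (z : ℂ) :
    Summable (fun n : ℕ =>
      ‖(-z) ^ n / ((n.factorial : ℂ) * Complex.Gamma (-(ν : ℂ) * n + (1 - (ν : ℂ))))‖) := by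
  have h1ν : 0 < 1 - ν := by linarith
  set b : ℝ := 2 * (‖z‖ + 1) with hbdef
  have hb2 : 2 ≤ b := by rw [hbdef]; linarith [norm_nonneg z]
  -- Step 1: termwise bound via the reflection formula
  have key : ∀ n : ℕ,
      ‖(-z) ^ n / ((n.factorial : ℂ) * Complex.Gamma (-(ν : ℂ) * n + (1 - (ν : ℂ))))‖
        ≤ ‖z‖ ^ n * Real.Gamma (ν * (n + 1)) / n.factorial := by
    intro n
    have harg : -(ν : ℂ) * n + (1 - (ν : ℂ)) = ((1 - ν * (n + 1) : ℝ) : ℂ) := by push_cast; ring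
    rw [harg, Complex.Gamma_ofReal, norm_div, norm_mul, norm_pow, norm_neg,
      Complex.norm_natCast, Complex.norm_real, Real.norm_eq_abs]
    set x : ℝ := 1 - ν * (n + 1) with hxdef
    have hs : 0 < ν * (n + 1) := by positivity
    have hGs := Real.Gamma_pos_of_pos hs
    by_cases hΓ : Real.Gamma x = 0
    · rw [hΓ, abs_zero, mul_zero, div_zero]
      positivity
    · have hrefl := Real.Gamma_mul_Gamma_one_sub x
      have h1x : 1 - x = ν * (n + 1) := by rw [hxdef]; ring
      rw [h1x] at hrefl
      have hsin : Real.sin (Real.pi * x) ≠ 0 := by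
        intro h
        rw [h, div_zero, mul_eq_zero] at hrefl
        rcases hrefl with h' | h'
        · exact hΓ h'
        · exact hGs.ne' h'
      have hππ : |Real.Gamma x| * Real.Gamma (ν * (n + 1))
          = Real.pi / |Real.sin (Real.pi * x)| := by
        rw [← abs_of_pos hGs, ← abs_mul, hrefl, abs_div, abs_of_pos Real.pi_pos]
      have habs_sin : |Real.sin (Real.pi * x)| ≤ 1 :=
        abs_le.mpr ⟨Real.neg_one_le_sin _, Real.sin_le_one _⟩
      have hge : 1 ≤ |Real.Gamma x| * Real.Gamma (ν * (n + 1)) := by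
        rw [hππ, le_div_iff₀ (abs_pos.mpr hsin)]
        linarith [Real.pi_gt_three]
      have hfacpos : (0:ℝ) < n.factorial := by exact_mod_cast n.factorial_pos
      have habsΓ : (0:ℝ) < |Real.Gamma x| := abs_pos.mpr hΓ
      rw [div_le_div_iff₀ (by positivity) hfacpos]
      calc ‖z‖ ^ n * (n.factorial : ℝ) = (‖z‖ ^ n * n.factorial) * 1 := by ring
        _ ≤ (‖z‖ ^ n * n.factorial) * (|Real.Gamma x| * Real.Gamma (ν * (n + 1))) := by
            apply mul_le_mul_of_nonneg_left hge (by positivity)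
        _ = ‖z‖ ^ n * Real.Gamma (ν * (n + 1)) * ((n.factorial : ℝ) * |Real.Gamma x|) := by ring
  -- Step 2: the majorant is summable
  have hmaj : Summable (fun n : ℕ => ‖z‖ ^ n * Real.Gamma (ν * (n + 1)) / n.factorial) := by
    obtain ⟨q, hq⟩ := exists_nat_ge (2 / (1 - ν))
    have hq0 : 0 < (q : ℝ) := lt_of_lt_of_le (by positivity) hq
    have hν2q : 2 / (q : ℝ) ≤ 1 - ν := by
      rw [div_le_iff₀ h1ν] at hq
      rw [div_le_iff₀ hq0]
      nlinarith
    obtain ⟨N, hN⟩ := exists_nat_ge (max (max (1 / ν) ((q : ℝ) * (ν + 1))) (b ^ q / ν))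
    have hN1 : 1 / ν ≤ N := le_trans (le_max_of_le_left (le_max_left _ _)) hN
    have hN2 : (q : ℝ) * (ν + 1) ≤ N := le_trans (le_max_of_le_left (le_max_right _ _)) hN
    have hN3 : b ^ q / ν ≤ N := le_trans (le_max_right _ _) hN
    have hbound : ∀ n : ℕ, N ≤ n →
        ‖z‖ ^ n * Real.Gamma (ν * (n + 1)) / n.factorial ≤ (1/2 : ℝ) ^ n := by
      intro n hn
      have hnN : (N : ℝ) ≤ n := by exact_mod_cast hn
      have hn0 : (0:ℝ) ≤ n := Nat.cast_nonneg n
      set s : ℝ := ν * (n + 1) with hsdef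
      have hseq : s = ν * n + ν := by rw [hsdef]; ring
      have hs0 : 0 < s := by positivity
      have hνn : 1 ≤ ν * n := by
        have h := le_trans hN1 hnN
        rw [div_le_iff₀ hν0] at h
        linarith
      have hs1 : 1 ≤ s := by linarith
      set k : ℕ := Nat.ceil s with hkdef
      have hsk : s ≤ (k : ℝ) := Nat.le_ceil s
      have hk1 : (k : ℝ) < s + 1 := Nat.ceil_lt_add_one hs0.le
      have hΓle : Real.Gamma s ≤ k.factorial :=
        gamma_le_factorial_aux hs1 (by linarith)
      -- k ≤ n - n/q
      have hnq : (q : ℝ) * (ν + 1) ≤ n := le_trans hN2 hnN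
      have hν' : ν ≤ 1 - 2 / (q : ℝ) := by linarith
      have hmul : ν * (n:ℝ) ≤ (1 - 2 / (q : ℝ)) * n :=
        mul_le_mul_of_nonneg_right hν' hn0
      have h3 : ν + 1 ≤ (n : ℝ) / q := by
        rw [le_div_iff₀ hq0]; linarith
      have heq2 : (1 - 2 / (q : ℝ)) * n = (n : ℝ) - 2 * ((n : ℝ) / q) := by ring
      have hkr : (k : ℝ) ≤ (n : ℝ) - (n : ℝ) / q := by
        have : (k : ℝ) < ν * n + ν + 1 + 1 := by linarith
        linarith
      have hnq' : 0 ≤ (n : ℝ) / q := by positivity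
      have hkn : k ≤ n := by
        have : (k : ℝ) ≤ (n : ℝ) := by linarith
        exact_mod_cast this
      have hcast_sub : ((n - k : ℕ) : ℝ) = (n : ℝ) - k := by rw [Nat.cast_sub hkn]
      -- n ≤ q * (n - k)
      have hq_exp : n ≤ q * (n - k) := by
        have h4 : (n : ℝ) / q ≤ (n : ℝ) - k := by linarith
        rw [div_le_iff₀ hq0] at h4
        have : (n : ℝ) ≤ (q : ℝ) * ((n - k : ℕ) : ℝ) := by
          rw [hcast_sub]; linarith [h4]
        exact_mod_cast this
      -- b ^ q ≤ k + 1
      have hbq : b ^ q ≤ (k : ℝ) + 1 := by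
        have h1 : b ^ q / ν ≤ n := le_trans hN3 hnN
        rw [div_le_iff₀ hν0] at h1
        have : b ^ q ≤ ν * n := by linarith [mul_comm (b ^ q) ν]
        linarith
      have hb1 : (1 : ℝ) ≤ b := by linarith
      have hpow : b ^ n ≤ ((k : ℝ) + 1) ^ (n - k) :=
        calc b ^ n ≤ b ^ (q * (n - k)) := pow_le_pow_right₀ hb1 hq_exp
          _ = (b ^ q) ^ (n - k) := by rw [pow_mul]
          _ ≤ ((k : ℝ) + 1) ^ (n - k) := pow_le_pow_left₀ (by positivity) hbq _
      have hfac : (k.factorial : ℝ) * ((k : ℝ) + 1) ^ (n - k) ≤ n.factorial := by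
        have h := Nat.factorial_mul_pow_le_factorial (m := k) (n := n - k)
        rw [Nat.add_sub_cancel' hkn] at h
        exact_mod_cast h
      have hfacb : (k.factorial : ℝ) * b ^ n ≤ n.factorial :=
        calc (k.factorial : ℝ) * b ^ n ≤ (k.factorial : ℝ) * ((k : ℝ) + 1) ^ (n - k) :=
              mul_le_mul_of_nonneg_left hpow (by positivity)
          _ ≤ n.factorial := hfac
      have hfacpos : (0:ℝ) < n.factorial := by exact_mod_cast n.factorial_pos
      have hbn : (0:ℝ) < b ^ n := by positivity
      calc ‖z‖ ^ n * Real.Gamma s / n.factorial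
          ≤ ‖z‖ ^ n * k.factorial / n.factorial := by
            gcongr
        _ ≤ ‖z‖ ^ n / b ^ n := by
            rw [div_le_div_iff₀ hfacpos hbn]
            calc ‖z‖ ^ n * (k.factorial : ℝ) * b ^ n
                = ‖z‖ ^ n * ((k.factorial : ℝ) * b ^ n) := by ring
              _ ≤ ‖z‖ ^ n * n.factorial :=
                  mul_le_mul_of_nonneg_left hfacb (by positivity)
        _ = (‖z‖ / b) ^ n := by rw [div_pow]
        _ ≤ (1/2 : ℝ) ^ n := by
            apply pow_le_pow_left₀ (by positivity)
            rw [div_le_iff₀ (by linarith : (0:ℝ) < b), hbdef]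
            linarith [norm_nonneg z]
    rw [← summable_nat_add_iff N]
    refine Summable.of_nonneg_of_le ?_ ?_
      (summable_geometric_of_lt_one (r := (1/2 : ℝ)) (by norm_num) (by norm_num))
    · exact fun n => div_nonneg (mul_nonneg (pow_nonneg (norm_nonneg z) _)
        (Real.Gamma_pos_of_pos (by positivity)).le) (Nat.cast_nonneg _)
    · exact fun n => (hbound (n + N) (Nat.le_add_left N n)).trans
        (pow_le_pow_of_le_one (by norm_num) (by norm_num) (Nat.le_add_right n N))
  exact Summable.of_nonneg_of_le (fun n => norm_nonneg _) key hmaj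
end
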